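/- arXiv:math-ph/0412087 — 4 statements merged into one kernel-verified Lean document; each statement's English description precedes it below -/
import Mathlib

section
/- Let V be a complex vector space with an sl₂-triple of operators E, F, H. Let m ∈ ℂ satisfy 2m + k + 1 ≠ 0 for all integers k ≥ 1, and let v ∈ V satisfy Hv = 2mv and E^{N+1}v = 0 for some natural number N. Then E(P_m v) = 0, where P_m v = Σ_{n=0}^{N} ((−1)^n / (n! · ∏_{k=1}^{n} (2m + k + 1))) F^n E^n v. That is, the Löwdin–Shapiro extremal projector sends every weight-2m vector on which E acts nilpotently to a highest weight vector. -/
open Finset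

private lemma hw_pow' {V : Type*} [AddCommGroup V] [Module ℂ V]
    (E H : Module.End ℂ V) (hHE : H * E - E * H = (2 : ℂ) • E)
    (m : ℂ) (v : V) (hv : H v = (2 * m) • v) :
    ∀ n : ℕ, H ((E ^ n) v) = (2 * m + 2 * n) • (E ^ n) v := by
  intro n
  induction n with
  | zero => simpa using hv
  | succ n ih =>
    have h1 : (E ^ (n + 1)) v = E ((E ^ n) v) := by
      rw [pow_succ']; rfl
    have h2 := congrArg (fun f : Module.End ℂ V => f ((E ^ n) v)) hHE
    simp only [LinearMap.sub_apply, Module.End.mul_apply, LinearMap.smul_apply] at h2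
    have h3 : H (E ((E ^ n) v)) = (2 : ℂ) • E ((E ^ n) v) + E (H ((E ^ n) v)) :=
      eq_add_of_sub_eq h2
    rw [h1, h3, ih, map_smul]
    push_cast
    module

private lemma EFpow' {V : Type*} [AddCommGroup V] [Module ℂ V]
    (E F H : Module.End ℂ V)
    (hHF : H * F - F * H = (-2 : ℂ) • F)
    (hEF : E * F - F * E = H) :
    ∀ (n : ℕ) (w : V) (lam : ℂ), H w = lam • w →
      E ((F ^ (n + 1)) w) = (F ^ (n + 1)) (E w) + (((n : ℂ) + 1) * (lam - n)) • (F ^ n) w := by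
  intro n
  induction n with
  | zero =>
    intro w lam hw
    have h := congrArg (fun f : Module.End ℂ V => f w) hEF
    simp only [LinearMap.sub_apply, Module.End.mul_apply] at h
    have hEFw : E (F w) = F (E w) + lam • w := by
      rw [eq_add_of_sub_eq (h.trans hw)]; abel
    simp only [zero_add, pow_one, pow_zero, Module.End.one_apply, Nat.cast_zero]
    rw [hEFw]
    module
  | succ n ih =>
    intro w lam hw
    have hF := congrArg (fun f : Module.End ℂ V => f w) hHF
    simp only [LinearMap.sub_apply, Module.End.mul_apply, LinearMap.smul_apply] at hF
    have hFw : H (F w) = (lam - 2) • F w := by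
      rw [eq_add_of_sub_eq hF, hw, map_smul]; module
    have h := congrArg (fun f : Module.End ℂ V => f w) hEF
    simp only [LinearMap.sub_apply, Module.End.mul_apply] at h
    have hEFw : E (F w) = F (E w) + lam • w := by
      rw [eq_add_of_sub_eq (h.trans hw)]; abel
    have h1 : (F ^ (n + 2)) w = (F ^ (n + 1)) (F w) := by rw [pow_succ]; rfl
    have h2 : (F ^ (n + 1)) w = (F ^ n) (F w) := by rw [pow_succ]; rfl
    have h3 : (F ^ (n + 2)) (E w) = (F ^ (n + 1)) (F (E w)) := by rw [pow_succ]; rfl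
    rw [h1, ih (F w) (lam - 2) hFw, hEFw, map_add, map_smul, h3, ← h2]
    push_cast
    module

open Finset in
/-- Löwdin–Shapiro extremal projector for an `sl₂`-triple `E, F, H` of operators on a complex
vector space: if `2m + k + 1 ≠ 0` for all integers `k ≥ 1`, `Hv = 2m v` and `E^(N+1) v = 0`,
then `E (P_m v) = 0` where
`P_m v = Σ_{n=0}^{N} ((−1)^n / (n! · ∏_{k=1}^{n} (2m+k+1))) F^n E^n v`. -/
theorem extremal_projector_highest_weight
    {V : Type*} [AddCommGroup V] [Module ℂ V]
    (E F H : Module.End ℂ V)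
    (hHE : H * E - E * H = (2 : ℂ) • E)
    (hHF : H * F - F * H = (-2 : ℂ) • F)
    (hEF : E * F - F * E = H)
    (m : ℂ) (hm : ∀ k : ℕ, 1 ≤ k → 2 * m + k + 1 ≠ 0)
    (v : V) (hv : H v = (2 * m) • v)
    (N : ℕ) (hN : (E ^ (N + 1)) v = 0) :
    E (∑ n ∈ range (N + 1),
        (((-1 : ℂ) ^ n / ((n.factorial : ℂ) * ∏ k ∈ Icc 1 n, (2 * m + k + 1))) •
          (F ^ n) ((E ^ n) v))) = 0 := by
  set c : ℕ → ℂ :=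
    fun n => (-1 : ℂ) ^ n / ((n.factorial : ℂ) * ∏ k ∈ Icc 1 n, (2 * m + k + 1)) with hc
  set a : ℕ → V := fun n => c n • (F ^ n) ((E ^ (n + 1)) v) with ha
  -- key coefficient recursion
  have hprodne : ∀ n : ℕ, (∏ k ∈ Icc 1 n, (2 * m + (k : ℂ) + 1)) ≠ 0 := by
    intro n
    refine Finset.prod_ne_zero_iff.mpr ?_
    intro k hk
    exact hm k (Finset.mem_Icc.mp hk).1
  have key : ∀ j : ℕ, c (j + 1) * (((j : ℂ) + 1) * (2 * m + (j : ℂ) + 2)) = - c j := by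
    intro j
    have hprod : (∏ k ∈ Icc 1 (j + 1), (2 * m + (k : ℂ) + 1))
        = (∏ k ∈ Icc 1 j, (2 * m + (k : ℂ) + 1)) * (2 * m + ((j : ℂ) + 1) + 1) := by
      rw [Finset.prod_Icc_succ_top (by omega)]
      push_cast; ring
    have hfac : ((j + 1).factorial : ℂ) = ((j : ℂ) + 1) * (j.factorial : ℂ) := by
      rw [Nat.factorial_succ]; push_cast; ring
    have hjne : ((j : ℂ) + 1) ≠ 0 := Nat.cast_add_one_ne_zero j
    have hfacne : ((j.factorial : ℂ)) ≠ 0 := Nat.cast_ne_zero.mpr j.factorial_ne_zero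
    have hlast : (2 * m + (j : ℂ) + 2) ≠ 0 := by
      have h := hm (j + 1) (by omega)
      push_cast at h
      intro h'; exact h (by linear_combination h')
    have hD : (((j + 1).factorial : ℂ) * ∏ k ∈ Icc 1 (j + 1), (2 * m + (k : ℂ) + 1))
        = (((j : ℂ) + 1) * (2 * m + (j : ℂ) + 2))
          * ((j.factorial : ℂ) * ∏ k ∈ Icc 1 j, (2 * m + (k : ℂ) + 1)) := by
      rw [hprod, hfac]; ring
    simp only [hc]
    rw [hD, pow_succ]
    have hP := hprodne j
    field_simp
  -- rewrite each term
  have hterm0 : E (c 0 • (F ^ 0) ((E ^ 0) v)) = a 0 := by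
    simp only [ha, map_smul, pow_zero, pow_one, zero_add, Module.End.one_apply]
  have hterm : ∀ j : ℕ,
      E (c (j + 1) • (F ^ (j + 1)) ((E ^ (j + 1)) v)) = a (j + 1) - a j := by
    intro j
    have hw := hw_pow' E H hHE m v hv (j + 1)
    have hEcomm := EFpow' E F H hHF hEF j ((E ^ (j + 1)) v) (2 * m + 2 * ((j : ℂ) + 1))
      (by rw [hw]; push_cast; module)
    have hEE : (E ^ (j + 2)) v = E ((E ^ (j + 1)) v) := by
      rw [pow_succ' E (j + 1)]; rfl
    rw [map_smul, hEcomm, ← hEE, smul_add, smul_smul]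
    have hco : c (j + 1) * (((j : ℂ) + 1) * (2 * m + 2 * ((j : ℂ) + 1) - (j : ℂ))) = - c j := by
      rw [← key j]; ring
    rw [hco, ha]
    simp only [neg_smul]
    abel
  rw [map_sum, Finset.sum_range_succ']
  have hrw : ∀ j ∈ range N,
      E (c (j + 1) • (F ^ (j + 1)) ((E ^ (j + 1)) v)) = a (j + 1) - a j :=
    fun j _ => hterm j
  rw [Finset.sum_congr rfl hrw, hterm0, Finset.sum_range_sub]
  have haN : a N = 0 := by
    simp only [ha, hN, map_zero, smul_zero]
  rw [haN]
  abel
end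

section
/- Let V be a complex vector space with an sl₂-triple of operators E, F, H. Let m ∈ ℂ satisfy 2m + k + 1 ≠ 0 for all integers k ≥ 1, and let u ∈ V satisfy Hu = 2(m+1)u and E^{N+1}u = 0 for some natural number N. Then Fu satisfies H(Fu) = 2m(Fu), and P_m(Fu) = 0, where P_m(Fu) = Σ_{n=0}^{N+1} ((−1)^n / (n! · ∏_{k=1}^{n} (2m + k + 1))) F^n E^n (Fu). That is, the extremal projector annihilates the image of the lowering operator F (the relation P J₋ = 0). -/
open Finset in
/-- The extremal projector annihilates the image of the lowering operator (`P J₋ = 0`):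
for an `sl₂`-triple `E, F, H` on a complex vector space, if `2m + k + 1 ≠ 0` for all
integers `k ≥ 1`, `Hu = 2(m+1) u` and `E^(N+1) u = 0`, then `H (F u) = 2m (F u)` and
`P_m (F u) = Σ_{n=0}^{N+1} ((−1)^n / (n! · ∏_{k=1}^{n} (2m+k+1))) F^n E^n (F u) = 0`. -/
theorem extremal_projector_annihilates_lowering
    {V : Type*} [AddCommGroup V] [Module ℂ V]
    (E F H : Module.End ℂ V)
    (hHE : H * E - E * H = (2 : ℂ) • E)
    (hHF : H * F - F * H = (-2 : ℂ) • F)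
    (hEF : E * F - F * E = H)
    (m : ℂ) (hm : ∀ k : ℕ, 1 ≤ k → 2 * m + k + 1 ≠ 0)
    (u : V) (hu : H u = (2 * (m + 1)) • u)
    (N : ℕ) (hN : (E ^ (N + 1)) u = 0) :
    H (F u) = (2 * m) • F u ∧
    ∑ n ∈ range (N + 2),
        (((-1 : ℂ) ^ n / ((n.factorial : ℂ) * ∏ k ∈ Icc 1 n, (2 * m + k + 1))) •
          (F ^ n) ((E ^ n) (F u))) = 0 := by
  have hHF' : H * F = F * H + (-2 : ℂ) • F := by
    linear_combination (norm := module) hHF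
  have hHE' : H * E = E * H + (2 : ℂ) • E := by
    linear_combination (norm := module) hHE
  have hEF' : E * F = F * E + H := by
    linear_combination (norm := module) hEF
  have hHFu : H (F u) = (2 * m) • F u := by
    have h1 : H (F u) = (H * F) u := rfl
    rw [h1, hHF']
    simp only [LinearMap.add_apply, LinearMap.smul_apply, Module.End.mul_apply, hu, map_smul]
    module
  refine ⟨hHFu, ?_⟩
  have hEn : ∀ n : ℕ, H ((E ^ n) u) = (2 * (m + 1) + 2 * n) • (E ^ n) u := by
    intro n
    induction n with
    | zero => simpa using hu
    | succ n ih =>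
      have h1 : (E ^ (n + 1)) u = E ((E ^ n) u) := by rw [pow_succ' E n]; rfl
      rw [h1]
      have h2 : H (E ((E ^ n) u)) = (H * E) ((E ^ n) u) := rfl
      rw [h2, hHE']
      simp only [LinearMap.add_apply, LinearMap.smul_apply, Module.End.mul_apply, ih, map_smul]
      push_cast
      module
  have key : ∀ n : ℕ, (E ^ (n + 1)) (F u) =
      F ((E ^ (n + 1)) u) + (((n : ℂ) + 1) * (2 * m + n + 2)) • (E ^ n) u := by
    intro n
    induction n with
    | zero =>
      have h1 : (E ^ 1) (F u) = (E * F) u := by simp [Module.End.mul_apply]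
      rw [h1, hEF']
      simp only [LinearMap.add_apply, Module.End.mul_apply, hu]
      have h2 : (E ^ 1) u = E u := by simp
      rw [h2]
      simp only [pow_zero, Module.End.one_apply]
      module
    | succ n ih =>
      have h1 : (E ^ (n + 2)) (F u) = E ((E ^ (n + 1)) (F u)) := by rw [pow_succ' E (n+1)]; rfl
      rw [h1, ih]
      simp only [map_add, map_smul]
      have h2 : E (F ((E ^ (n + 1)) u)) = (E * F) ((E ^ (n + 1)) u) := rfl
      rw [h2, hEF']
      simp only [LinearMap.add_apply, Module.End.mul_apply, hEn (n + 1)]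
      have h3 : E ((E ^ (n + 1)) u) = (E ^ (n + 2)) u := by rw [pow_succ' E (n+1)]; rfl
      have h4 : E ((E ^ n) u) = (E ^ (n + 1)) u := by rw [pow_succ' E n]; rfl
      rw [h3, h4]
      push_cast
      match_scalars <;> ring
  set c : ℕ → ℂ := fun n =>
    (-1 : ℂ) ^ n / ((n.factorial : ℂ) * ∏ k ∈ Icc 1 n, (2 * m + k + 1)) with hc
  have hP : ∀ n : ℕ, (∏ k ∈ Icc 1 n, (2 * m + (k : ℂ) + 1)) ≠ 0 := by
    intro n
    refine Finset.prod_ne_zero_iff.mpr ?_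
    intro k hk
    exact hm k (Finset.mem_Icc.mp hk).1
  have hcrec : ∀ n : ℕ, c (n + 1) * (((n : ℂ) + 1) * (2 * m + n + 2)) = -(c n) := by
    intro n
    have hfac : ((n + 1).factorial : ℂ) = ((n : ℂ) + 1) * (n.factorial : ℂ) := by
      rw [Nat.factorial_succ]; push_cast; ring
    have hprod : (∏ k ∈ Icc 1 (n + 1), (2 * m + (k : ℂ) + 1)) =
        (∏ k ∈ Icc 1 n, (2 * m + (k : ℂ) + 1)) * (2 * m + (n : ℂ) + 2) := by
      rw [Finset.prod_Icc_succ_top (by omega : 1 ≤ n + 1)]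
      push_cast; ring
    have hn1 : ((n : ℂ) + 1) ≠ 0 := by
      have := Nat.cast_add_one_ne_zero (R := ℂ) n; exact_mod_cast this
    have hfacne : ((n.factorial : ℂ)) ≠ 0 := Nat.cast_ne_zero.mpr n.factorial_ne_zero
    have hlast : 2 * m + (n : ℂ) + 2 ≠ 0 := by
      have := hm (n + 1) (by omega)
      push_cast at this
      intro h; apply this; linear_combination h
    simp only [hc]
    rw [pow_succ, hfac, hprod]
    set P : ℂ := ∏ k ∈ Icc 1 n, (2 * m + (k : ℂ) + 1) with hPdef
    have hPne : P ≠ 0 := hP n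
    field_simp
  set g : ℕ → V := fun n => c n • (F ^ (n + 1)) ((E ^ n) u) with hg
  have hterm : ∀ n : ℕ, c (n + 1) • (F ^ (n + 1)) ((E ^ (n + 1)) (F u)) =
      g (n + 1) - g n := by
    intro n
    have e1 : (F ^ (n + 1)) ((E ^ (n + 1)) (F u)) =
        (F ^ (n + 2)) ((E ^ (n + 1)) u) +
          (((n : ℂ) + 1) * (2 * m + n + 2)) • (F ^ (n + 1)) ((E ^ n) u) := by
      rw [key n, map_add, map_smul]
      congr 1
    rw [e1, smul_add, smul_smul, hcrec n]
    simp only [hg, neg_smul]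
    module
  have hterm0 : c 0 • (F ^ 0) ((E ^ 0) (F u)) = g 0 := by
    simp [hg, hc]
  calc ∑ n ∈ range (N + 2), c n • (F ^ n) ((E ^ n) (F u))
      = (∑ i ∈ range (N + 1), c (i + 1) • (F ^ (i + 1)) ((E ^ (i + 1)) (F u))) +
        c 0 • (F ^ 0) ((E ^ 0) (F u)) := Finset.sum_range_succ' _ (N + 1)
    _ = (∑ i ∈ range (N + 1), (g (i + 1) - g i)) + g 0 := by
        rw [hterm0]; congr 1; exact Finset.sum_congr rfl fun i _ => hterm i
    _ = (g (N + 1) - g 0) + g 0 := by rw [Finset.sum_range_sub]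
    _ = g (N + 1) := by abel
    _ = 0 := by simp [hg, hN]
end

section
/- Let V be a finite-dimensional complex vector space with an sl₂-triple of operators E, F, H, and let m be a nonnegative real number. Then the eigenspace ker(H − 2m·id) decomposes as a direct sum ker(H − 2m·id) = (ker E ∩ ker(H − 2m·id)) ⊕ F(ker(H − 2(m+1)·id)), and for every v ∈ ker(H − 2m·id) the extremal projector gives exactly this projection: P_m v ∈ ker E and v − P_m v ∈ F(ker(H − 2(m+1)·id)). -/
open Finset

section Aux
variable {V : Type*} [AddCommGroup V] [Module ℂ V]
variable {E F H : Module.End ℂ V}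

lemma aux_hE (hHE : H * E - E * H = (2 : ℂ) • E) (w : V) :
    H (E w) = E (H w) + (2 : ℂ) • E w := by
  have h := LinearMap.ext_iff.mp hHE w
  simp only [LinearMap.sub_apply, Module.End.mul_apply, LinearMap.smul_apply] at h
  rw [← h]; abel

lemma aux_hF (hHF : H * F - F * H = (-2 : ℂ) • F) (w : V) :
    H (F w) = F (H w) - (2 : ℂ) • F w := by
  have h := LinearMap.ext_iff.mp hHF w
  simp only [LinearMap.sub_apply, Module.End.mul_apply, LinearMap.smul_apply, LinearMap.neg_apply, neg_smul] at h
  rw [sub_eq_add_neg, ← h]; abel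

lemma aux_hEF (hEF : E * F - F * E = H) (w : V) :
    E (F w) = F (E w) + H w := by
  have h := LinearMap.ext_iff.mp hEF w
  simp only [LinearMap.sub_apply, Module.End.mul_apply] at h
  rw [← h]; abel

lemma pow_apply_succ (G : Module.End ℂ V) (n : ℕ) (w : V) :
    (G ^ (n + 1)) w = G ((G ^ n) w) := by
  rw [pow_succ']; rfl

lemma pow_apply_succ' (G : Module.End ℂ V) (n : ℕ) (w : V) :
    (G ^ (n + 1)) w = (G ^ n) (G w) := by
  rw [pow_succ]; rfl

lemma aux_wtE (hHE : H * E - E * H = (2 : ℂ) • E) {μ : ℂ} {v : V} (hv : H v = μ • v)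
    (n : ℕ) : H ((E ^ n) v) = (μ + 2 * n) • (E ^ n) v := by
  induction n with
  | zero => simpa using hv
  | succ n ih =>
    rw [pow_apply_succ, aux_hE hHE, ih, map_smul]
    push_cast
    module

lemma aux_wtF (hHF : H * F - F * H = (-2 : ℂ) • F) {μ : ℂ} {v : V} (hv : H v = μ • v)
    (n : ℕ) : H ((F ^ n) v) = (μ - 2 * n) • (F ^ n) v := by
  induction n with
  | zero => simpa using hv
  | succ n ih =>
    rw [pow_apply_succ, aux_hF hHF, ih, map_smul]
    push_cast
    module

lemma aux_nilp [FiniteDimensional ℂ V] (hHE : H * E - E * H = (2 : ℂ) • E)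
    {μ : ℂ} {v : V} (hv : H v = μ • v) : ∃ N : ℕ, (E ^ N) v = 0 := by
  by_contra hcon
  push_neg at hcon
  have hli : LinearIndependent ℂ (fun n : ℕ => (E ^ n) v) := by
    refine Module.End.eigenvectors_linearIndependent' H (fun n : ℕ => μ + 2 * n) ?_ _ ?_
    · intro a b hab
      simp only [add_right_inj] at hab
      have := mul_left_cancel₀ (two_ne_zero (α := ℂ)) hab
      exact_mod_cast this
    · intro n
      exact ⟨Module.End.mem_eigenspace_iff.mpr (aux_wtE hHE hv n), hcon n⟩
  exact Module.Finite.not_linearIndependent_of_infinite _ hli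

end Aux

section Aux2
variable {V : Type*} [AddCommGroup V] [Module ℂ V]
variable {E F H : Module.End ℂ V}

lemma aux_EFpow (hHF : H * F - F * H = (-2 : ℂ) • F) (hEF : E * F - F * E = H)
    {μ : ℂ} {w : V} (hw : H w = μ • w) (n : ℕ) :
    E ((F ^ (n + 1)) w) = (F ^ (n + 1)) (E w) + (((n : ℂ) + 1) * (μ - n)) • (F ^ n) w := by
  induction n with
  | zero => simpa [hw] using aux_hEF hEF w
  | succ n ih =>
    rw [pow_apply_succ F (n + 1), aux_hEF hEF, ih, map_add, map_smul,
      aux_wtF hHF hw (n + 1), ← pow_apply_succ F (n + 1), ← pow_apply_succ F n]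
    push_cast
    module

lemma aux_EpowF (hHE : H * E - E * H = (2 : ℂ) • E) (hEF : E * F - F * E = H)
    {μ : ℂ} {w : V} (hw : H w = μ • w) (n : ℕ) :
    (E ^ (n + 1)) (F w) = F ((E ^ (n + 1)) w) + (((n : ℂ) + 1) * (μ + n)) • (E ^ n) w := by
  induction n with
  | zero => simpa [hw] using aux_hEF hEF w
  | succ n ih =>
    rw [pow_apply_succ E (n + 1), ih, map_add, map_smul, aux_hEF hEF,
      aux_wtE hHE hw (n + 1), ← pow_apply_succ E (n + 1), ← pow_apply_succ E n]
    push_cast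
    module

end Aux2

noncomputable def pcoef (m : ℝ) (n : ℕ) : ℂ :=
  (-1 : ℂ) ^ n / ((n.factorial : ℂ) * ∏ k ∈ Finset.Icc 1 n, (2 * (m : ℂ) + k + 1))

lemma pcoef_zero (m : ℝ) : pcoef m 0 = 1 := by simp [pcoef]

lemma aux_denom_ne {m : ℝ} (hm : 0 ≤ m) (n : ℕ) : 2 * (m : ℂ) + n + 1 ≠ 0 := by
  have h : 2 * (m : ℂ) + n + 1 = ((2 * m + n + 1 : ℝ) : ℂ) := by push_cast; ring
  rw [h, Complex.ofReal_ne_zero]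
  positivity

lemma aux_prod_ne {m : ℝ} (hm : 0 ≤ m) (n : ℕ) :
    (∏ k ∈ Finset.Icc 1 n, (2 * (m : ℂ) + k + 1)) ≠ 0 :=
  Finset.prod_ne_zero_iff.mpr fun k _ => aux_denom_ne hm k

lemma pcoef_rec {m : ℝ} (hm : 0 ≤ m) (n : ℕ) :
    pcoef m (n + 1) * (((n : ℂ) + 1) * (2 * (m : ℂ) + (n + 1) + 1)) = - pcoef m n := by
  have hprod : (∏ k ∈ Finset.Icc 1 (n + 1), (2 * (m : ℂ) + k + 1))
      = (∏ k ∈ Finset.Icc 1 n, (2 * (m : ℂ) + k + 1)) * (2 * (m : ℂ) + (n + 1) + 1) := by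
    rw [Finset.prod_Icc_succ_top (Nat.succ_le_succ (Nat.zero_le n))]
    push_cast
    ring
  have h1 : ((n.factorial : ℂ)) ≠ 0 := Nat.cast_ne_zero.mpr n.factorial_ne_zero
  have h2 := aux_prod_ne hm n
  have h3 : (2 * (m : ℂ) + (n + 1) + 1) ≠ 0 := by
    have := aux_denom_ne hm (n + 1); push_cast at this ⊢; convert this using 2
  have h4 : ((n : ℂ) + 1) ≠ 0 := by
    have : ((n : ℂ) + 1) = ((n + 1 : ℕ) : ℂ) := by push_cast; ring
    rw [this]; exact_mod_cast Nat.succ_ne_zero n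
  simp only [pcoef, hprod, Nat.factorial_succ]
  push_cast
  field_simp
  ring

section Core
variable {V : Type*} [AddCommGroup V] [Module ℂ V]
variable {E F H : Module.End ℂ V}

lemma aux_core (hHE : H * E - E * H = (2 : ℂ) • E) (hHF : H * F - F * H = (-2 : ℂ) • F)
    (hEF : E * F - F * E = H) {m : ℝ} (hm : 0 ≤ m) {v : V}
    (hv : H v = (2 * (m : ℂ)) • v) {N : ℕ} (hN : (E ^ (N + 1)) v = 0) :
    E (∑ n ∈ Finset.range (N + 1), pcoef m n • (F ^ n) ((E ^ n) v)) = 0 ∧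
    H (∑ n ∈ Finset.range (N + 1), pcoef m n • (F ^ n) ((E ^ n) v))
      = (2 * (m : ℂ)) • (∑ n ∈ Finset.range (N + 1), pcoef m n • (F ^ n) ((E ^ n) v)) ∧
    ∃ y : V, H y = (2 * ((m : ℂ) + 1)) • y ∧
      F y = v - ∑ n ∈ Finset.range (N + 1), pcoef m n • (F ^ n) ((E ^ n) v) := by
  set g : ℕ → V := fun k => if h : k = 0 then 0
    else pcoef m (k - 1) • (F ^ (k - 1)) ((E ^ k) v) with hgdef
  have hg0 : g 0 = 0 := by simp [hgdef]
  have hgs : ∀ j : ℕ, g (j + 1) = pcoef m j • (F ^ j) ((E ^ (j + 1)) v) := by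
    intro j; simp [hgdef]
  have key : ∀ n : ℕ, E (pcoef m n • (F ^ n) ((E ^ n) v)) = g (n + 1) - g n := by
    intro n
    cases n with
    | zero =>
      rw [hgs 0, hg0]
      simp [pcoef_zero, pow_apply_succ]
    | succ j =>
      have hw := aux_wtE hHE hv (j + 1)
      have hc : pcoef m (j + 1) * (((j : ℂ) + 1) * ((2 * (m : ℂ) + 2 * ((j + 1 : ℕ) : ℂ)) - (j : ℂ)))
          = - pcoef m j := by
        rw [← pcoef_rec hm j]; push_cast; ring
      rw [map_smul, aux_EFpow hHF hEF hw j, smul_add, smul_smul, hc,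
        ← pow_apply_succ E (j + 1), hgs, hgs]
      module
  have hwn : ∀ n : ℕ, H ((F ^ n) ((E ^ n) v)) = (2 * (m : ℂ)) • (F ^ n) ((E ^ n) v) := by
    intro n
    have h := aux_wtF hHF (aux_wtE hHE hv n) n
    rw [h]; congr 1; ring
  refine ⟨?_, ?_, ?_⟩
  · rw [map_sum]
    have h1 : ∑ n ∈ Finset.range (N + 1), E (pcoef m n • (F ^ n) ((E ^ n) v))
        = ∑ n ∈ Finset.range (N + 1), (g (n + 1) - g n) :=
      Finset.sum_congr rfl fun n _ => key n
    rw [h1, Finset.sum_range_sub g, hgs, hN, hg0]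
    simp
  · rw [map_sum, Finset.smul_sum]
    refine Finset.sum_congr rfl fun n _ => ?_
    rw [map_smul, hwn n, smul_comm]
  · refine ⟨∑ n ∈ Finset.range N, (- pcoef m (n + 1)) • (F ^ n) ((E ^ (n + 1)) v), ?_, ?_⟩
    · rw [map_sum, Finset.smul_sum]
      refine Finset.sum_congr rfl fun n _ => ?_
      have hw : H ((F ^ n) ((E ^ (n + 1)) v))
          = (2 * ((m : ℂ) + 1)) • (F ^ n) ((E ^ (n + 1)) v) := by
        have h := aux_wtF hHF (aux_wtE hHE hv (n + 1)) n
        rw [h]; congr 1; push_cast; ring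
      rw [map_smul, hw, smul_comm]
    · rw [map_sum, Finset.sum_range_succ' (fun n => pcoef m n • (F ^ n) ((E ^ n) v)) N]
      have hf0 : pcoef m 0 • ((F ^ 0 : Module.End ℂ V) ((E ^ 0 : Module.End ℂ V) v)) = v := by
        simp [pcoef_zero]
      rw [hf0]
      have h2 : ∑ n ∈ Finset.range N, F ((- pcoef m (n + 1)) • (F ^ n) ((E ^ (n + 1)) v))
          = - ∑ n ∈ Finset.range N, pcoef m (n + 1) • (F ^ (n + 1)) ((E ^ (n + 1)) v) := by
        rw [← Finset.sum_neg_distrib]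
        refine Finset.sum_congr rfl fun n _ => ?_
        rw [map_smul, neg_smul, ← pow_apply_succ]
      rw [h2]
      abel

end Core

open Finset in
/-- For an `sl₂`-triple `E, F, H` on a finite-dimensional complex vector space and a real
`m ≥ 0`, the weight space `ker (H − 2m·id)` decomposes as
`(ker E ∩ ker (H − 2m·id)) ⊕ F (ker (H − 2(m+1)·id))`, and the extremal projector realizes
exactly this projection: `P_m v ∈ ker E` and `v − P_m v ∈ F (ker (H − 2(m+1)·id))`. -/
theorem extremal_projector_weight_space_decomposition
    {V : Type*} [AddCommGroup V] [Module ℂ V] [FiniteDimensional ℂ V]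
    (E F H : Module.End ℂ V)
    (hHE : H * E - E * H = (2 : ℂ) • E)
    (hHF : H * F - F * H = (-2 : ℂ) • F)
    (hEF : E * F - F * E = H)
    (m : ℝ) (hm : 0 ≤ m) :
    (LinearMap.ker E ⊓ LinearMap.ker (H - (2 * (m : ℂ)) • (1 : Module.End ℂ V))) ⊔
        Submodule.map F (LinearMap.ker (H - (2 * ((m : ℂ) + 1)) • (1 : Module.End ℂ V)))
      = LinearMap.ker (H - (2 * (m : ℂ)) • (1 : Module.End ℂ V)) ∧
    Disjoint
      (LinearMap.ker E ⊓ LinearMap.ker (H - (2 * (m : ℂ)) • (1 : Module.End ℂ V)))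
      (Submodule.map F (LinearMap.ker (H - (2 * ((m : ℂ) + 1)) • (1 : Module.End ℂ V)))) ∧
    ∀ v ∈ LinearMap.ker (H - (2 * (m : ℂ)) • (1 : Module.End ℂ V)),
      (∃ N : ℕ, (E ^ (N + 1)) v = 0) ∧
      ∀ N : ℕ, (E ^ (N + 1)) v = 0 →
        E (∑ n ∈ range (N + 1),
            (((-1 : ℂ) ^ n / ((n.factorial : ℂ) * ∏ k ∈ Icc 1 n, (2 * (m : ℂ) + k + 1))) •
              (F ^ n) ((E ^ n) v))) = 0 ∧
        v - (∑ n ∈ range (N + 1),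
            (((-1 : ℂ) ^ n / ((n.factorial : ℂ) * ∏ k ∈ Icc 1 n, (2 * (m : ℂ) + k + 1))) •
              (F ^ n) ((E ^ n) v)))
          ∈ Submodule.map F (LinearMap.ker (H - (2 * ((m : ℂ) + 1)) • (1 : Module.End ℂ V))) := by
  have memker : ∀ (μ : ℂ) (x : V),
      x ∈ LinearMap.ker (H - μ • (1 : Module.End ℂ V)) ↔ H x = μ • x := by
    intro μ x
    simp [LinearMap.mem_ker, LinearMap.sub_apply, LinearMap.smul_apply, Module.End.one_apply,
      sub_eq_zero]
  have hps : ∀ (v : V) (N : ℕ),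
      (∑ n ∈ range (N + 1),
        (((-1 : ℂ) ^ n / ((n.factorial : ℂ) * ∏ k ∈ Icc 1 n, (2 * (m : ℂ) + k + 1))) •
          (F ^ n) ((E ^ n) v)))
      = ∑ n ∈ range (N + 1), pcoef m n • (F ^ n) ((E ^ n) v) := fun _ _ => rfl
  have hnil : ∀ (v : V), H v = (2 * (m : ℂ)) • v → ∃ N : ℕ, (E ^ (N + 1)) v = 0 := by
    intro v hv
    obtain ⟨N0, hN0⟩ := aux_nilp hHE hv
    exact ⟨N0, by rw [pow_apply_succ, hN0, map_zero]⟩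
  refine ⟨?_, ?_, ?_⟩
  · -- sup equality
    refine le_antisymm (sup_le inf_le_right ?_) ?_
    · rintro x ⟨u, hu, rfl⟩
      rw [SetLike.mem_coe, memker] at hu
      rw [memker]
      rw [aux_hF hHF, hu, map_smul]
      module
    · intro v hv
      rw [memker] at hv
      obtain ⟨N, hN⟩ := hnil v hv
      obtain ⟨hE0, hH0, y, hy1, hy2⟩ := aux_core hHE hHF hEF hm hv hN
      rw [Submodule.mem_sup]
      refine ⟨∑ n ∈ range (N + 1), pcoef m n • (F ^ n) ((E ^ n) v),
        ⟨LinearMap.mem_ker.mpr hE0, (memker _ _).mpr hH0⟩,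
        v - ∑ n ∈ range (N + 1), pcoef m n • (F ^ n) ((E ^ n) v),
        ⟨y, (memker _ _).mpr hy1, hy2⟩, by abel⟩
  · -- disjointness
    rw [Submodule.disjoint_def]
    rintro x hx1 ⟨u, hu, rfl⟩
    obtain ⟨hxE, hxH⟩ := Submodule.mem_inf.mp hx1
    have hEFu : E (F u) = 0 := LinearMap.mem_ker.mp hxE
    rw [SetLike.mem_coe, memker] at hu
    have hstep : ∀ n : ℕ, (E ^ n) u = 0 → u = 0 := by
      intro n
      induction n with
      | zero => intro h; simpa using h
      | succ n ih =>
        intro h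
        have hrel := aux_EpowF hHE hEF hu n
        have hl : (E ^ (n + 1)) (F u) = 0 := by
          rw [pow_apply_succ', hEFu, map_zero]
        rw [hl, h, map_zero, zero_add] at hrel
        have hc : (((n : ℂ) + 1) * (2 * ((m : ℂ) + 1) + n)) ≠ 0 := by
          refine mul_ne_zero ?_ ?_
          · exact_mod_cast Nat.cast_add_one_ne_zero (R := ℂ) n
          · have h3 := aux_denom_ne hm (n + 1)
            push_cast at h3
            intro hz; apply h3; rw [← hz]; ring
        have := (smul_eq_zero.mp hrel.symm).resolve_left hc
        exact ih this
    obtain ⟨K, hK⟩ := aux_nilp hHE hu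
    rw [hstep K hK, map_zero]
  · -- the projector facts
    intro v hv
    rw [memker] at hv
    refine ⟨hnil v hv, ?_⟩
    intro N hN
    obtain ⟨hE0, hH0, y, hy1, hy2⟩ := aux_core hHE hHF hEF hm hv hN
    rw [hps]
    exact ⟨hE0, ⟨y, (memker _ _).mpr hy1, hy2⟩⟩
end

section
/- Let V be a finite-dimensional complex vector space with an sl₂-triple of operators E, F, H, let Ω = F∘E + (1/4)·H∘(H + 2·id) be the Casimir operator, let S ⊂ ℂ be the (finite) set of eigenvalues of Ω on V, and let j be a nonnegative real number. Then Löwdin's Casimir-product operator coincides with Shapiro's series on the weight-2j eigenspace: for every v ∈ ker(H − 2j·id), ∏_{c ∈ S, c ≠ j(j+1)} (j(j+1) − c)^{−1}·(Ω − c·id) v = Σ_{n=0}^{N} ((−1)^n / (n! · ∏_{k=1}^{n} (2j + k + 1))) F^n E^n v, where N is any natural number with E^{N+1}v = 0. -/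
open Finset Polynomial

private lemma eig_aeval {V : Type*} [AddCommGroup V] [Module ℂ V]
    (f : Module.End ℂ V) (a : ℂ) (x : V) (hx : f x = a • x) (p : ℂ[X]) :
    (Polynomial.aeval f p) x = p.eval a • x := by
  have hpow : ∀ n : ℕ, (f ^ n) x = a ^ n • x := by
    intro n
    induction n with
    | zero => simp
    | succ n ih =>
        rw [pow_succ', Module.End.mul_apply, ih, map_smul, hx, smul_smul, pow_succ, mul_comm]
  induction p using Polynomial.induction_on' with
  | add p q hp hq => simp [hp, hq, add_smul]
  | monomial n b =>
      simp only [Polynomial.aeval_monomial, Polynomial.eval_monomial, Module.End.mul_apply,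
        hpow, Module.algebraMap_end_apply, smul_smul]

private lemma lemA {V : Type*} [AddCommGroup V] [Module ℂ V] (f : Module.End ℂ V) :
    ∀ (T : Finset ℂ) (P : ℂ[X]),
      (∀ μ ∈ T, Module.End.HasEigenvalue f μ → P.eval μ = 0) →
      ∀ w : V, (Polynomial.aeval f (∏ μ ∈ T, (X - C μ))) w = 0 →
      (Polynomial.aeval f P) w = 0 := by
  classical
  intro T
  induction T using Finset.induction_on with
  | empty =>
      intro P _ w hw
      simp only [Finset.prod_empty, map_one, Module.End.one_apply] at hw
      simp [hw]
  | @insert a s ha ih =>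
      intro P hP w hw
      rw [Finset.prod_insert ha, map_mul, Module.End.mul_apply] at hw
      set u : V := (Polynomial.aeval f (∏ μ ∈ s, (X - C μ))) w with hu_def
      have hfu : f u = a • u := by
        rw [map_sub, aeval_X, aeval_C] at hw
        simp only [LinearMap.sub_apply, Module.algebraMap_end_apply] at hw
        rw [sub_eq_zero] at hw
        exact hw
      by_cases hu : u = 0
      · exact ih P (fun μ hμ => hP μ (Finset.mem_insert_of_mem hμ)) w hu
      · have heig : Module.End.HasEigenvalue f a :=
          Module.End.hasEigenvalue_of_hasEigenvector
            ⟨Module.End.mem_eigenspace_iff.mpr hfu, hu⟩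
        have hroot : P.eval a = 0 := hP a (Finset.mem_insert_self a s) heig
        obtain ⟨P₁, hP₁⟩ := (Polynomial.dvd_iff_isRoot.mpr hroot)
        have hP₁root : ∀ μ ∈ s, Module.End.HasEigenvalue f μ → P₁.eval μ = 0 := by
          intro μ hμ hei
          have h0 : P.eval μ = 0 := hP μ (Finset.mem_insert_of_mem hμ) hei
          rw [hP₁] at h0
          simp only [Polynomial.eval_mul, Polynomial.eval_sub, Polynomial.eval_X,
            Polynomial.eval_C] at h0
          rcases mul_eq_zero.mp h0 with h | h
          · exact absurd (sub_eq_zero.mp h) (fun hh => ha (hh ▸ hμ))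
          · exact h
        have hkill : (Polynomial.aeval f (∏ μ ∈ s, (X - C μ)))
            ((Polynomial.aeval f (X - C a)) w) = 0 := by
          rw [← Module.End.mul_apply, ← map_mul,
            mul_comm (∏ μ ∈ s, (X - C μ)) (X - C a), map_mul, Module.End.mul_apply, ← hu_def]
          exact hw
        have key := ih P₁ hP₁root _ hkill
        rw [hP₁, mul_comm (X - C a) P₁, map_mul, Module.End.mul_apply]
        exact key

open Finset Polynomial in
/-- Löwdin's Casimir-product operator coincides with Shapiro's series on the weight-`2j`
eigenspace: for every `v ∈ ker (H − 2j·id)` and every `N` with `E^(N+1) v = 0`,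
`∏_{c ∈ S, c ≠ j(j+1)} (j(j+1) − c)⁻¹ · (Ω − c·id) v
  = Σ_{n=0}^{N} ((−1)^n / (n! · ∏_{k=1}^{n} (2j+k+1))) F^n E^n v`. -/
theorem lowdin_equals_shapiro
    {V : Type*} [AddCommGroup V] [Module ℂ V] [FiniteDimensional ℂ V]
    (E F H : Module.End ℂ V)
    (hHE : H * E - E * H = (2 : ℂ) • E)
    (hHF : H * F - F * H = (-2 : ℂ) • F)
    (hEF : E * F - F * E = H)
    (Ω : Module.End ℂ V)
    (hΩ : Ω = F * E + (4⁻¹ : ℂ) • (H * (H + (2 : ℂ) • (1 : Module.End ℂ V))))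
    (S : Finset ℂ)
    (hS : ∀ c : ℂ, c ∈ S ↔ Module.End.HasEigenvalue Ω c)
    (j : ℝ) (hj : 0 ≤ j) :
    ∀ v ∈ LinearMap.ker (H - (2 * (j : ℂ)) • (1 : Module.End ℂ V)),
      ∀ N : ℕ, (E ^ (N + 1)) v = 0 →
        (Polynomial.aeval Ω
            (∏ c ∈ S.filter (· ≠ (j : ℂ) * ((j : ℂ) + 1)),
              (Polynomial.C (((j : ℂ) * ((j : ℂ) + 1) - c)⁻¹) *
                (Polynomial.X - Polynomial.C c)))) v
          = ∑ n ∈ range (N + 1),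
              (((-1 : ℂ) ^ n / ((n.factorial : ℂ) * ∏ k ∈ Icc 1 n, (2 * (j : ℂ) + k + 1))) •
                (F ^ n) ((E ^ n) v)) := by
  classical
  intro v hv N hN
  -- basic operator identities
  have hEF' : E * F = F * E + H := by rw [← hEF]; abel
  have hHF' : H * F = F * H + (-2:ℂ) • F := by rw [← hHF]; abel
  have hHE' : H * E = E * H + (2:ℂ) • E := by rw [← hHE]; abel
  have hΩF : Ω * F = F * Ω := by
    have c1 : (F*E)*F = F*(F*E) + F*H := by rw [mul_assoc, hEF', mul_add]
    have c2 : H * (H * F) = F * (H*H) + (-4:ℂ) • (F*H) + (4:ℂ) • F := by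
      calc H * (H*F) = H*(F*H + (-2:ℂ)•F) := by rw [hHF']
        _ = (H*F)*H + (-2:ℂ)•(H*F) := by rw [mul_add, mul_smul_comm, mul_assoc]
        _ = (F*H + (-2:ℂ)•F)*H + (-2:ℂ)•(F*H + (-2:ℂ)•F) := by rw [hHF']
        _ = F*(H*H) + (-4:ℂ)•(F*H) + (4:ℂ)•F := by
            simp only [add_mul, smul_mul_assoc, smul_add, smul_smul, mul_assoc]
            module
    rw [hΩ]
    calc (F*E + (4⁻¹:ℂ)•(H*(H+(2:ℂ)•(1 : Module.End ℂ V)))) * F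
        = (F*E)*F + (4⁻¹:ℂ)•(H*(H*F) + (2:ℂ)•(H*F)) := by
          simp only [add_mul, smul_mul_assoc, mul_add, mul_smul_comm, mul_one, one_mul,
            smul_mul_assoc, mul_assoc]
      _ = (F*(F*E) + F*H) + (4⁻¹:ℂ)•((F*(H*H) + (-4:ℂ)•(F*H) + (4:ℂ)•F)
            + (2:ℂ)•(F*H + (-2:ℂ)•F)) := by rw [c1, c2, hHF']
      _ = F*(F*E + (4⁻¹:ℂ)•(H*(H+(2:ℂ)•(1 : Module.End ℂ V)))) := by
          simp only [mul_add, mul_smul_comm, mul_one, smul_add, smul_smul]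
          module
  set lam : ℂ := (j:ℂ) * ((j:ℂ) + 1) with hlam
  set μ : ℕ → ℂ := fun n => ((j:ℂ) + n) * ((j:ℂ) + n + 1) with hμ_def
  set u : ℕ → V := fun n => (E ^ n) v with hu_def
  set vv : ℕ → V := fun n => (F ^ n) (u n) with hvv_def
  set c : ℕ → ℂ := fun n =>
    ((-1 : ℂ) ^ n / ((n.factorial : ℂ) * ∏ k ∈ Icc 1 n, (2 * (j : ℂ) + k + 1))) with hc_def
  -- weight vector facts
  have hv0 : H v = (2 * (j:ℂ)) • v := by
    rw [LinearMap.mem_ker, LinearMap.sub_apply, LinearMap.smul_apply, Module.End.one_apply,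
      sub_eq_zero] at hv
    exact hv
  have hHu : ∀ n : ℕ, H (u n) = (2 * (j:ℂ) + 2 * n) • u n := by
    intro n
    induction n with
    | zero => simpa [hu_def] using hv0
    | succ n ih =>
        have hun : u (n+1) = E (u n) := by simp [hu_def, pow_succ', Module.End.mul_apply]
        rw [hun]
        calc H (E (u n)) = (H * E) (u n) := rfl
          _ = (E * H + (2:ℂ) • E) (u n) := by rw [hHE']
          _ = E (H (u n)) + (2:ℂ) • E (u n) := rfl
          _ = (2 * (j:ℂ) + 2 * (n+1 : ℕ)) • E (u n) := by
              rw [ih, map_smul, ← add_smul]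
              congr 1
              push_cast
              ring
  have hΩu : ∀ n : ℕ, Ω (u n) = F (u (n+1)) + μ n • u n := by
    intro n
    have hun : u (n+1) = E (u n) := by simp [hu_def, pow_succ', Module.End.mul_apply]
    rw [hΩ, hun]
    have expand : (F * E + (4⁻¹:ℂ) • (H * (H + (2:ℂ) • (1 : Module.End ℂ V)))) (u n)
        = F (E (u n)) + (4⁻¹:ℂ) • (H (H (u n)) + (2:ℂ) • H (u n)) := by
      simp [LinearMap.add_apply, LinearMap.smul_apply, Module.End.mul_apply,
        Module.End.one_apply, map_add, map_smul]
    rw [expand, hHu n, map_smul, hHu n]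
    congr 1
    rw [smul_smul, smul_smul, ← add_smul, smul_smul]
    congr 1
    simp only [hμ_def]
    ring
  have hΩvv : ∀ n : ℕ, Ω (vv n) = vv (n+1) + μ n • vv n := by
    intro n
    have hcomm : Ω * F ^ n = F ^ n * Ω := Commute.pow_right hΩF n
    have h1 : Ω (vv n) = (F ^ n) (Ω (u n)) := by
      have := LinearMap.congr_fun hcomm (u n)
      simpa [Module.End.mul_apply, hvv_def] using this
    rw [h1, hΩu n, map_add, map_smul]
    congr 1
  have huN : u (N+1) = 0 := by simpa [hu_def] using hN
  have hvvN : vv (N+1) = 0 := by simp [hvv_def, huN]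
  -- scalar facts
  have hfac : ∀ k : ℕ, (2 * (j:ℂ) + k + 1) ≠ 0 := by
    intro k
    have e : (2 * (j:ℂ) + k + 1) = ((2*j + k + 1 : ℝ) : ℂ) := by push_cast; ring
    rw [e]
    exact_mod_cast (by positivity : (0:ℝ) < 2*j + k + 1).ne'
  have hprod : ∀ n : ℕ, (∏ k ∈ Icc 1 n, (2 * (j:ℂ) + k + 1)) ≠ 0 :=
    fun n => Finset.prod_ne_zero_iff.mpr fun k _ => hfac k
  have hfacn : ∀ n : ℕ, ((n.factorial : ℂ)) ≠ 0 :=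
    fun n => Nat.cast_ne_zero.mpr n.factorial_ne_zero
  have hinj : ∀ a b : ℕ, μ a = μ b → a = b := by
    intro a b hab
    simp only [hμ_def] at hab
    have hkey : ((a:ℂ) - b) * ((j:ℂ) + a + ((j:ℂ) + b) + 1) = 0 := by
      linear_combination hab
    have h2 : ((j:ℂ) + a + ((j:ℂ) + b) + 1) ≠ 0 := by
      have e : ((j:ℂ) + a + ((j:ℂ) + b) + 1) = ((j + a + (j + b) + 1 : ℝ) : ℂ) := by
        push_cast; ring
      rw [e]
      exact_mod_cast (by positivity : (0:ℝ) < j + a + (j + b) + 1).ne'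
    have := (mul_eq_zero.mp hkey).resolve_right h2
    exact_mod_cast sub_eq_zero.mp this
  have hcrec : ∀ n : ℕ, c n = (lam - μ (n+1)) * c (n+1) := by
    intro n
    have h1 : (∏ k ∈ Icc 1 (n+1), (2 * (j:ℂ) + k + 1))
        = (∏ k ∈ Icc 1 n, (2 * (j:ℂ) + k + 1)) * (2 * (j:ℂ) + (n:ℂ) + 2) := by
      rw [Finset.prod_Icc_succ_top (by omega)]
      congr 1
      push_cast
      ring
    have hlmu : lam - μ (n+1) = -(((n:ℂ) + 1) * (2 * (j:ℂ) + (n:ℂ) + 2)) := by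
      simp only [hμ_def, hlam]
      push_cast
      ring
    have hfs : ((n+1).factorial : ℂ) = ((n:ℂ) + 1) * (n.factorial : ℂ) := by
      rw [Nat.factorial_succ]
      push_cast
      ring
    have Cc' : (2 * (j:ℂ) + (n:ℂ) + 2) ≠ 0 := by
      have e : (2 * (j:ℂ) + (n:ℂ) + 2) = ((2*j + n + 2 : ℝ) : ℂ) := by push_cast; ring
      rw [e]
      exact_mod_cast (by positivity : (0:ℝ) < 2*j + n + 2).ne'
    have D' : ((n:ℂ) + 1) ≠ 0 := Nat.cast_add_one_ne_zero n
    have A := hfacn n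
    have B := hprod n
    simp only [hc_def]
    rw [hlmu, h1, hfs, pow_succ]
    field_simp
  -- s is a lam-eigenvector
  set s : V := ∑ n ∈ range (N+1), c n • vv n with hs_def
  have hΩs : Ω s = lam • s := by
    rw [hs_def, map_sum, Finset.smul_sum]
    simp only [map_smul, hΩvv, smul_add, smul_smul]
    rw [Finset.sum_add_distrib]
    have key : ∑ n ∈ range (N+1), c n • vv (n+1)
        = ∑ n ∈ range (N+1), ((lam - μ n) * c n) • vv n := by
      rw [Finset.sum_range_succ, hvvN, smul_zero, add_zero, Finset.sum_range_succ']
      have h0 : lam - μ 0 = 0 := by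
        simp only [hμ_def, hlam]
        push_cast
        ring
      rw [h0, zero_mul, zero_smul, add_zero]
      exact Finset.sum_congr rfl fun n _ => by rw [← hcrec n]
    rw [key, ← Finset.sum_add_distrib]
    exact Finset.sum_congr rfl fun n _ => by rw [← add_smul]; congr 1; ring
  set P : ℂ[X] := ∏ cc ∈ S.filter (· ≠ lam),
      (C ((lam - cc)⁻¹) * (X - C cc)) with hP_def
  have hPeval1 : P.eval lam = 1 := by
    rw [hP_def, Polynomial.eval_prod]
    apply Finset.prod_eq_one
    intro cc hcc
    have hne : cc ≠ lam := by simpa using (Finset.mem_filter.mp hcc).2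
    simp only [Polynomial.eval_mul, Polynomial.eval_sub, Polynomial.eval_X, Polynomial.eval_C]
    exact inv_mul_cancel₀ (sub_ne_zero.mpr (Ne.symm hne))
  have hPs : (Polynomial.aeval Ω P) s = s := by
    rw [eig_aeval Ω lam s hΩs P, hPeval1, one_smul]
  -- the tail is killed by P(Ω)
  set Q : ℕ → ℕ → ℂ[X] := fun d k => ∏ i ∈ range d, (X - C (μ (k+i))) with hQ_def
  have hQstep : ∀ d k, Q (d+1) k = Q d (k+1) * (X - C (μ k)) := by
    intro d k
    simp only [hQ_def]
    rw [Finset.prod_range_succ']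
    congr 1
    exact Finset.prod_congr rfl fun i _ => by rw [show k + (i+1) = (k+1)+i from by omega]
  have hQkill : ∀ d k, k + d = N + 1 → (Polynomial.aeval Ω (Q d k)) (vv k) = 0 := by
    intro d
    induction d with
    | zero =>
        intro k hk
        obtain rfl : k = N+1 := by omega
        simp [hQ_def, hvvN]
    | succ d ih =>
        intro k hk
        rw [hQstep, map_mul, Module.End.mul_apply]
        have h4 : (Polynomial.aeval Ω (X - C (μ k))) (vv k) = vv (k+1) := by
          rw [map_sub, aeval_X, aeval_C]
          simp only [LinearMap.sub_apply, Module.algebraMap_end_apply]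
          rw [hΩvv k]
          abel
        rw [h4]
        exact ih (k+1) (by omega)
  have hQfull : ∀ i ∈ range N, (Polynomial.aeval Ω (Q N 1)) (vv (i+1)) = 0 := by
    intro i hi
    have hiN : i < N := Finset.mem_range.mp hi
    have hsplit : Q N 1 = Q i 1 * Q (N - i) (i+1) := by
      simp only [hQ_def]
      conv_lhs => rw [show N = i + (N - i) from by omega]
      rw [Finset.prod_range_add]
      congr 1
      exact Finset.prod_congr rfl fun t _ => by rw [show 1 + (i + t) = (i+1)+t from by omega]
    rw [hsplit, map_mul, Module.End.mul_apply, hQkill (N-i) (i+1) (by omega), map_zero]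
  -- decompose v
  have hc0 : c 0 = 1 := by simp [hc_def]
  have hvv0 : vv 0 = v := by simp [hvv_def, hu_def]
  have hsv : s = v + ∑ i ∈ range N, c (i+1) • vv (i+1) := by
    rw [hs_def, Finset.sum_range_succ', hc0, hvv0, one_smul, add_comm]
  have hPw : (Polynomial.aeval Ω P) (∑ i ∈ range N, c (i+1) • vv (i+1)) = 0 := by
    set T : Finset ℂ := (range N).image (fun i => μ (1+i)) with hT_def
    apply lemA Ω T P
    · intro t ht heig
      obtain ⟨i, hi, rfl⟩ := Finset.mem_image.mp ht
      have htS : μ (1+i) ∈ S := (hS _).mpr heig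
      have htne : μ (1+i) ≠ lam := by
        intro h
        have hμ0 : lam = μ 0 := by
          simp only [hμ_def, hlam]
          push_cast
          ring
        have := hinj (1+i) 0 (h.trans hμ0)
        omega
      rw [hP_def, Polynomial.eval_prod]
      apply Finset.prod_eq_zero (Finset.mem_filter.mpr ⟨htS, by simpa using htne⟩)
      simp
    · have hTP : (∏ t ∈ T, (X - C t)) = Q N 1 := by
        rw [hT_def, Finset.prod_image]
        intro a ha b hb hab
        have := hinj (1+a) (1+b) hab
        omega
      rw [hTP, map_sum]
      apply Finset.sum_eq_zero
      intro i hi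
      rw [map_smul, hQfull i hi, smul_zero]
  have hveq : v = s - ∑ i ∈ range N, c (i+1) • vv (i+1) := by
    rw [hsv]; abel
  calc (Polynomial.aeval Ω P) v
      = (Polynomial.aeval Ω P) s
        - (Polynomial.aeval Ω P) (∑ i ∈ range N, c (i+1) • vv (i+1)) := by
        rw [hveq, map_sub]
    _ = s := by rw [hPs, hPw, sub_zero]
end
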